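/- Let τ lie in the complex upper half-plane, let n be an integer, and let Δ₁, Δ₂, Δ₃ ∈ ℂ satisfy Δ₁ + Δ₂ + Δ₃ = n. Then θ₂(n;τ)·θ₂(Δ₁;τ)θ₂(Δ₂;τ)θ₂(Δ₃;τ) − θ₃(n;τ)·θ₃(Δ₁;τ)θ₃(Δ₂;τ)θ₃(Δ₃;τ) + θ₄(n;τ)·θ₄(Δ₁;τ)θ₄(Δ₂;τ)θ₄(Δ₃;τ) = 0. -/
import Mathlib


noncomputable def θ₁ (u τ : ℂ) : ℂ :=
  -Complex.I * Complex.exp (Real.pi * Complex.I * τ / 4 + Real.pi * Complex.I * u) *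
    jacobiTheta₂ (u + (1 + τ) / 2) τ

noncomputable def θ₂ (u τ : ℂ) : ℂ :=
  Complex.exp (Real.pi * Complex.I * τ / 4 + Real.pi * Complex.I * u) *
    jacobiTheta₂ (u + τ / 2) τ

noncomputable def θ₃ (u τ : ℂ) : ℂ := jacobiTheta₂ u τ

noncomputable def θ₄ (u τ : ℂ) : ℂ := jacobiTheta₂ (u + 1 / 2) τ

noncomputable def θ₁' (u τ : ℂ) : ℂ := deriv (fun v => θ₁ v τ) u

noncomputable def θ₂' (u τ : ℂ) : ℂ := deriv (fun v => θ₂ v τ) u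

noncomputable def θ₃' (u τ : ℂ) : ℂ := deriv (fun v => θ₃ v τ) u

noncomputable def θ₄' (u τ : ℂ) : ℂ := deriv (fun v => θ₄ v τ) u

open Complex

namespace JacobiAux

noncomputable def f2 (τ u : ℂ) (m : ℤ) : ℂ :=
  cexp (Real.pi * I * τ / 4 + Real.pi * I * u) * jacobiTheta₂_term m (u + τ / 2) τ

noncomputable def f3 (τ u : ℂ) (m : ℤ) : ℂ := jacobiTheta₂_term m u τ

noncomputable def f4 (τ u : ℂ) (m : ℤ) : ℂ := jacobiTheta₂_term m (u + 1 / 2) τ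

lemma summable_norm_term {τ : ℂ} (hτ : 0 < τ.im) (u : ℂ) :
    Summable fun m : ℤ => ‖jacobiTheta₂_term m u τ‖ :=
  summable_norm_iff.mpr ((summable_jacobiTheta₂_term_iff u τ).mpr hτ)

lemma summable_norm_f2 {τ : ℂ} (hτ : 0 < τ.im) (u : ℂ) :
    Summable fun m : ℤ => ‖f2 τ u m‖ := by
  simpa [f2, norm_mul] using (summable_norm_term hτ (u + τ / 2)).mul_left
    ‖cexp (Real.pi * I * τ / 4 + Real.pi * I * u)‖

lemma summable_norm_f3 {τ : ℂ} (hτ : 0 < τ.im) (u : ℂ) :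
    Summable fun m : ℤ => ‖f3 τ u m‖ := summable_norm_term hτ u

lemma summable_norm_f4 {τ : ℂ} (hτ : 0 < τ.im) (u : ℂ) :
    Summable fun m : ℤ => ‖f4 τ u m‖ := summable_norm_term hτ (u + 1 / 2)

lemma hasSum_f3 {τ : ℂ} (hτ : 0 < τ.im) (u : ℂ) : HasSum (f3 τ u) (θ₃ u τ) := by
  rw [θ₃, jacobiTheta₂]
  exact ((summable_jacobiTheta₂_term_iff u τ).mpr hτ).hasSum

lemma hasSum_f4 {τ : ℂ} (hτ : 0 < τ.im) (u : ℂ) : HasSum (f4 τ u) (θ₄ u τ) := by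
  rw [θ₄, jacobiTheta₂]
  exact ((summable_jacobiTheta₂_term_iff _ τ).mpr hτ).hasSum

lemma hasSum_f2 {τ : ℂ} (hτ : 0 < τ.im) (u : ℂ) : HasSum (f2 τ u) (θ₂ u τ) := by
  rw [θ₂, jacobiTheta₂]
  exact (((summable_jacobiTheta₂_term_iff _ τ).mpr hτ).hasSum).mul_left _

lemma hasSum_quad {g1 g2 g3 g4 : ℤ → ℂ} {a1 a2 a3 a4 : ℂ}
    (h1 : HasSum g1 a1) (h2 : HasSum g2 a2) (h3 : HasSum g3 a3) (h4 : HasSum g4 a4)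
    (n1 : Summable fun m => ‖g1 m‖) (n2 : Summable fun m => ‖g2 m‖)
    (n3 : Summable fun m => ‖g3 m‖) (n4 : Summable fun m => ‖g4 m‖) :
    HasSum (fun v : ℤ × ℤ × ℤ × ℤ => g1 v.1 * (g2 v.2.1 * (g3 v.2.2.1 * g4 v.2.2.2)))
      (a1 * (a2 * (a3 * a4))) := by
  have S : Summable (fun v : ℤ × ℤ × ℤ × ℤ =>
      g1 v.1 * (g2 v.2.1 * (g3 v.2.2.1 * g4 v.2.2.2))) :=
    (n1.mul_norm (n2.mul_norm (n3.mul_norm n4))).of_norm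
  have e : (∑' v : ℤ × ℤ × ℤ × ℤ, g1 v.1 * (g2 v.2.1 * (g3 v.2.2.1 * g4 v.2.2.2)))
      = a1 * (a2 * (a3 * a4)) := by
    rw [← h1.tsum_eq, ← h2.tsum_eq, ← h3.tsum_eq, ← h4.tsum_eq,
      tsum_mul_tsum_of_summable_norm n3 n4,
      tsum_mul_tsum_of_summable_norm n2 (n3.mul_norm n4),
      tsum_mul_tsum_of_summable_norm n1 (n2.mul_norm (n3.mul_norm n4))]
  exact e ▸ S.hasSum




def ev (k : ℤ × ℤ × ℤ × ℤ) : ℤ × ℤ × ℤ × ℤ :=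
  (k.1, k.2.1, k.2.2.1, 2 * k.2.2.2 - k.1 - k.2.1 - k.2.2.1)

def ok (k : ℤ × ℤ × ℤ × ℤ) : ℤ × ℤ × ℤ × ℤ :=
  (k.1, k.2.1, k.2.2.1, 2 * k.2.2.2 + 1 - k.1 - k.2.1 - k.2.2.1)

def gE : (ℤ × ℤ × ℤ × ℤ) ≃ (ℤ × ℤ × ℤ × ℤ) where
  toFun k := (k.2.2.2 + 1, k.1 + k.2.1 - k.2.2.2, k.1 + k.2.2.1 - k.2.2.2, k.1)
  invFun j := (j.2.2.2, j.2.1 + j.1 - j.2.2.2 - 1, j.2.2.1 + j.1 - j.2.2.2 - 1, j.1 - 1)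
  left_inv := by rintro ⟨a, b, c, d⟩; dsimp only; simp only [Prod.mk.injEq, true_and, and_true]; omega
  right_inv := by rintro ⟨a, b, c, d⟩; dsimp only; simp only [Prod.mk.injEq, true_and, and_true]; omega

def rE : (ℤ × ℤ × ℤ × ℤ) ≃ (ℤ × ℤ × ℤ × ℤ) where
  toFun k := (-1 - k.1, k.2.1, k.2.2.1, k.2.2.2 - k.1)
  invFun j := (-1 - j.1, j.2.1, j.2.2.1, j.2.2.2 - 1 - j.1)
  left_inv := by rintro ⟨a, b, c, d⟩; dsimp only; simp only [Prod.mk.injEq, true_and, and_true]; omega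
  right_inv := by rintro ⟨a, b, c, d⟩; dsimp only; simp only [Prod.mk.injEq, true_and, and_true]; omega

lemma ev_inj : Function.Injective ev := by
  rintro ⟨a, b, c, d⟩ ⟨a', b', c', d'⟩ h
  simp only [ev, Prod.mk.injEq] at h ⊢
  omega

lemma ok_inj : Function.Injective ok := by
  rintro ⟨a, b, c, d⟩ ⟨a', b', c', d'⟩ h
  simp only [ok, Prod.mk.injEq] at h ⊢
  omega

lemma range_ev_compl : (Set.range ev)ᶜ = Set.range ok := by
  ext v
  obtain ⟨v0, v1, v2, v3⟩ := v
  simp only [Set.mem_compl_iff, Set.mem_range, ev, ok, Prod.mk.injEq]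
  constructor
  · intro h
    rcases Int.even_or_odd (v0 + v1 + v2 + v3) with ⟨r, hr⟩ | ⟨r, hr⟩
    · exact absurd ⟨(v0, v1, v2, r), by dsimp only; omega⟩ h
    · exact ⟨(v0, v1, v2, r), by dsimp only; omega⟩
  · rintro ⟨⟨a, b, c, d⟩, h⟩ ⟨⟨a', b', c', d'⟩, h'⟩
    simp only at h h'
    omega

lemma exp_eq_exp_int (x y : ℂ) (m : ℤ) (h : x = y + m * (2 * Real.pi * I)) :
    cexp x = cexp y := by
  rw [h, Complex.exp_add, Complex.exp_int_mul_two_pi_mul_I, mul_one]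

lemma exp_eq_neg_exp_int (x y : ℂ) (m : ℤ) (h : x = y + Real.pi * I + m * (2 * Real.pi * I)) :
    cexp x = -cexp y := by
  rw [h, Complex.exp_add, Complex.exp_add, Complex.exp_int_mul_two_pi_mul_I, mul_one,
    Complex.exp_pi_mul_I, mul_neg_one]



end JacobiAux

namespace JacobiAux

lemma key1 (τ a b c u0 : ℂ) (hu : a + b + c = u0) (k : ℤ × ℤ × ℤ × ℤ) :
    f2 τ u0 (ev k).1 * (f2 τ a (ev k).2.1 * (f2 τ b (ev k).2.2.1 * f2 τ c (ev k).2.2.2)) =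
    f3 τ u0 (ok (gE k)).1 *
      (f3 τ a (ok (gE k)).2.1 * (f3 τ b (ok (gE k)).2.2.1 * f3 τ c (ok (gE k)).2.2.2)) := by
  subst hu
  obtain ⟨k0, k1, k2, k3⟩ := k
  simp only [f2, f3, ev, ok, gE, jacobiTheta₂_term, Equiv.coe_fn_mk, ← Complex.exp_add]
  congr 1
  push_cast
  ring

lemma key2 (τ a b c : ℂ) (n : ℤ) (k : ℤ × ℤ × ℤ × ℤ) :
    f2 τ (n : ℂ) (ok k).1 * (f2 τ a (ok k).2.1 * (f2 τ b (ok k).2.2.1 * f2 τ c (ok k).2.2.2)) =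
    f2 τ (n : ℂ) (ev (rE k)).1 *
      (f2 τ a (ev (rE k)).2.1 * (f2 τ b (ev (rE k)).2.2.1 * f2 τ c (ev (rE k)).2.2.2)) := by
  obtain ⟨k0, k1, k2, k3⟩ := k
  simp only [f2, ev, ok, rE, jacobiTheta₂_term, Equiv.coe_fn_mk, ← Complex.exp_add]
  refine exp_eq_exp_int _ _ ((2 * k0 + 1) * n) ?_
  push_cast
  ring

lemma key3 (τ a b c u0 : ℂ) (k : ℤ × ℤ × ℤ × ℤ) :
    f4 τ u0 (ev k).1 * (f4 τ a (ev k).2.1 * (f4 τ b (ev k).2.2.1 * f4 τ c (ev k).2.2.2)) =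
    f3 τ u0 (ev k).1 * (f3 τ a (ev k).2.1 * (f3 τ b (ev k).2.2.1 * f3 τ c (ev k).2.2.2)) := by
  obtain ⟨k0, k1, k2, k3⟩ := k
  simp only [f3, f4, ev, jacobiTheta₂_term, ← Complex.exp_add]
  refine exp_eq_exp_int _ _ k3 ?_
  push_cast
  ring

lemma key4 (τ a b c u0 : ℂ) (k : ℤ × ℤ × ℤ × ℤ) :
    f4 τ u0 (ok k).1 * (f4 τ a (ok k).2.1 * (f4 τ b (ok k).2.2.1 * f4 τ c (ok k).2.2.2)) =
    -(f3 τ u0 (ok k).1 * (f3 τ a (ok k).2.1 * (f3 τ b (ok k).2.2.1 * f3 τ c (ok k).2.2.2))) := by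
  obtain ⟨k0, k1, k2, k3⟩ := k
  simp only [f3, f4, ok, jacobiTheta₂_term, ← Complex.exp_add]
  refine exp_eq_neg_exp_int _ _ k3 ?_
  push_cast
  ring

end JacobiAux


set_option maxHeartbeats 1000000 in
open JacobiAux in
theorem jacobi_three_term_identity (τ : ℂ) (hτ : 0 < τ.im) (n : ℤ) (Δ : Fin 3 → ℂ)
    (hΔ : Δ 0 + Δ 1 + Δ 2 = (n : ℂ)) :
    θ₂ (n : ℂ) τ * (θ₂ (Δ 0) τ * θ₂ (Δ 1) τ * θ₂ (Δ 2) τ) -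
      θ₃ (n : ℂ) τ * (θ₃ (Δ 0) τ * θ₃ (Δ 1) τ * θ₃ (Δ 2) τ) +
      θ₄ (n : ℂ) τ * (θ₄ (Δ 0) τ * θ₄ (Δ 1) τ * θ₄ (Δ 2) τ) = 0 := by
  set a := Δ 0 with ha
  set b := Δ 1 with hb
  set c := Δ 2 with hc
  set P2 : ℤ × ℤ × ℤ × ℤ → ℂ := fun v =>
    f2 τ (n : ℂ) v.1 * (f2 τ a v.2.1 * (f2 τ b v.2.2.1 * f2 τ c v.2.2.2)) with hP2
  set P3 : ℤ × ℤ × ℤ × ℤ → ℂ := fun v =>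
    f3 τ (n : ℂ) v.1 * (f3 τ a v.2.1 * (f3 τ b v.2.2.1 * f3 τ c v.2.2.2)) with hP3
  set P4 : ℤ × ℤ × ℤ × ℤ → ℂ := fun v =>
    f4 τ (n : ℂ) v.1 * (f4 τ a v.2.1 * (f4 τ b v.2.2.1 * f4 τ c v.2.2.2)) with hP4
  have H2 : HasSum P2 (θ₂ (n : ℂ) τ * (θ₂ a τ * (θ₂ b τ * θ₂ c τ))) :=
    hasSum_quad (hasSum_f2 hτ _) (hasSum_f2 hτ _) (hasSum_f2 hτ _) (hasSum_f2 hτ _)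
      (summable_norm_f2 hτ _) (summable_norm_f2 hτ _) (summable_norm_f2 hτ _)
      (summable_norm_f2 hτ _)
  have H3 : HasSum P3 (θ₃ (n : ℂ) τ * (θ₃ a τ * (θ₃ b τ * θ₃ c τ))) :=
    hasSum_quad (hasSum_f3 hτ _) (hasSum_f3 hτ _) (hasSum_f3 hτ _) (hasSum_f3 hτ _)
      (summable_norm_f3 hτ _) (summable_norm_f3 hτ _) (summable_norm_f3 hτ _)
      (summable_norm_f3 hτ _)
  have H4 : HasSum P4 (θ₄ (n : ℂ) τ * (θ₄ a τ * (θ₄ b τ * θ₄ c τ))) :=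
    hasSum_quad (hasSum_f4 hτ _) (hasSum_f4 hτ _) (hasSum_f4 hτ _) (hasSum_f4 hτ _)
      (summable_norm_f4 hτ _) (summable_norm_f4 hτ _) (summable_norm_f4 hτ _)
      (summable_norm_f4 hτ _)
  have Ht : HasSum (fun k => P3 (ok k)) (∑' k, P3 (ok k)) :=
    (H3.summable.comp_injective ok_inj).hasSum
  set t := ∑' k, P3 (ok k) with hts
  -- P2 over the even and odd ranges
  have h2ev : HasSum (P2 ∘ ev) t := by
    have := (gE.hasSum_iff (f := fun k => P3 (ok k))).mpr Ht
    exact this.congr_fun fun k => key1 τ a b c (n : ℂ) hΔ k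
  have h2ok : HasSum (P2 ∘ ok) t := by
    have := (rE.hasSum_iff (f := P2 ∘ ev)).mpr h2ev
    exact this.congr_fun fun k => key2 τ a b c n k
  have h2r : HasSum (P2 ∘ (↑) : Set.range ev → ℂ) t :=
    (ev_inj.hasSum_range_iff (f := P2)).mpr h2ev
  have h2rc : HasSum (P2 ∘ (↑) : ↥(Set.range ev)ᶜ → ℂ) t := by
    rw [range_ev_compl]
    exact (ok_inj.hasSum_range_iff (f := P2)).mpr h2ok
  have e2 : θ₂ (n : ℂ) τ * (θ₂ a τ * (θ₂ b τ * θ₂ c τ)) = t + t :=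
    H2.unique (h2r.add_compl h2rc)
  -- P3 - P4
  have HD : HasSum (fun v => P3 v - P4 v)
      (θ₃ (n : ℂ) τ * (θ₃ a τ * (θ₃ b τ * θ₃ c τ)) -
        θ₄ (n : ℂ) τ * (θ₄ a τ * (θ₄ b τ * θ₄ c τ))) := H3.sub H4
  have hDev : HasSum ((fun v => P3 v - P4 v) ∘ (↑) : Set.range ev → ℂ) 0 := by
    refine hasSum_zero.congr_fun ?_
    rintro ⟨v, k, rfl⟩
    simp only [Function.comp_apply, hP3, hP4]
    rw [key3 τ a b c (n : ℂ) k]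
    ring
  have hDok : HasSum ((fun v => P3 v - P4 v) ∘ ok) (t + t) := by
    refine (Ht.add Ht).congr_fun fun k => ?_
    simp only [Function.comp_apply, hP3, hP4]
    rw [key4 τ a b c (n : ℂ) k]
    ring
  have hDrc : HasSum ((fun v => P3 v - P4 v) ∘ (↑) : ↥(Set.range ev)ᶜ → ℂ) (t + t) := by
    rw [range_ev_compl]
    exact (ok_inj.hasSum_range_iff (f := fun v => P3 v - P4 v)).mpr hDok
  have e34 : θ₃ (n : ℂ) τ * (θ₃ a τ * (θ₃ b τ * θ₃ c τ)) -
      θ₄ (n : ℂ) τ * (θ₄ a τ * (θ₄ b τ * θ₄ c τ)) = 0 + (t + t) :=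
    HD.unique (hDev.add_compl hDrc)
  linear_combination e2 - e34
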